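/- arXiv:2509.10669 — 7 statements merged into one kernel-verified Lean document; each statement's English description precedes it below -/
import Mathlib

section
/- Let f be a symmetric real-valued function on pairs of positive integers, let n ≥ 4 and i ∈ {1,2}, and suppose L = (L_3, …, L_{n−1}, i) ∈ {1,2}^{n−2} satisfies TI_f(L) = M_f(n,i). Then for every j ∈ {3, …, n−1}, the prefix (L_3, …, L_j) satisfies TI_f(L_3, …, L_j) = M_f(j, L_j). -/
noncomputable section
open Classical

/-- Constant term of a degree-based topological index on polyomino chains. -/
def cst (f : ℕ → ℕ → ℝ) : ℝ := 4 * f 2 3 + 2 * f 2 2 + f 3 3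

/-- `gone f i` is `g_f(i)`, the increment for the first link (n = 3). -/
def gone (f : ℕ → ℕ → ℝ) (i : ℕ) : ℝ :=
  if i = 1 then 3 * f 3 3 else 2 * f 3 4 + 2 * f 2 4 - f 3 3

/-- `gpair f i j` is `g_f(i,j)`, the increment for a link `j` after a link `i`. -/
def gpair (f : ℕ → ℕ → ℝ) (i j : ℕ) : ℝ :=
  if i = 1 then
    (if j = 1 then 3 * f 3 3 else 3 * f 3 4 + f 2 4 + f 2 3 - 2 * f 3 3)
  else
    (if j = 1 then f 3 4 - f 2 4 + f 2 3 + 2 * f 3 3 else f 4 4 + 2 * f 2 4)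

/-- Sum of `gpair` increments along a list of links, given the previous link. -/
def chainSum (f : ℕ → ℕ → ℝ) : ℕ → List ℕ → ℝ
  | _, [] => 0
  | a, b :: t => gpair f a b + chainSum f b t

/-- `TI f L` is the degree-based topological index of the polyomino chain with
link vector `L = [L_3, …, L_n]`. -/
def TI (f : ℕ → ℕ → ℝ) : List ℕ → ℝ
  | [] => cst f
  | a :: t => cst f + gone f a + chainSum f a t

/-- `ValidLinks n L` means `L` is a link vector of a polyomino chain with `n` squares:
it has length `n - 2` and entries in `{1, 2}`. -/
def ValidLinks (n : ℕ) (L : List ℕ) : Prop :=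
  L.length = n - 2 ∧ ∀ x ∈ L, x = 1 ∨ x = 2

/-- `Mmax f n i` is the maximum of `TI f` over link vectors of length `n - 2`
with last entry `i`. -/
def Mmax (f : ℕ → ℕ → ℝ) (n i : ℕ) : ℝ :=
  sSup {t : ℝ | ∃ L, ValidLinks n L ∧ L.getLast? = some i ∧ TI f L = t}

/-- `mMin f n i` is the minimum of `TI f` over link vectors of length `n - 2`
with last entry `i`. -/
def mMin (f : ℕ → ℕ → ℝ) (n i : ℕ) : ℝ :=
  sInf {t : ℝ | ∃ L, ValidLinks n L ∧ L.getLast? = some i ∧ TI f L = t}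

/-- The tie count `n_t(n, i)`. -/
def nt (f : ℕ → ℕ → ℝ) : ℕ → ℕ → ℕ
  | n + 4, i =>
    if Mmax f (n + 3) 1 + gpair f 1 i = Mmax f (n + 3) 2 + gpair f 2 i then
      1 + nt f (n + 3) 1 + nt f (n + 3) 2
    else if Mmax f (n + 3) 1 + gpair f 1 i > Mmax f (n + 3) 2 + gpair f 2 i then
      nt f (n + 3) 1
    else
      nt f (n + 3) 2
  | _, _ => 0

/-- The function defining the augmented Zagreb index: `f(x,y) = (xy/(x+y-2))³`. -/
def fAZI : ℕ → ℕ → ℝ := fun x y => ((x * y : ℝ) / (x + y - 2)) ^ 3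


private lemma chainSum_append (f : ℕ → ℕ → ℝ) :
    ∀ (t : List ℕ) (a : ℕ) (S : List ℕ),
      chainSum f a (t ++ S) = chainSum f a t + chainSum f (t.getLastD a) S := by
  intro t
  induction t with
  | nil => intro a S; simp [chainSum]
  | cons b t ih =>
      intro a S
      simp only [List.cons_append, chainSum, List.getLastD_cons, List.append_eq]
      rw [ih b S]; ring

private lemma TI_append (f : ℕ → ℕ → ℝ) (P S : List ℕ) (a : ℕ)
    (ha : P.getLast? = some a) :
    TI f (P ++ S) = TI f P + chainSum f a S := by
  cases P with
  | nil => simp at ha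
  | cons p t =>
      have h : t.getLastD p = a := by
        rw [List.getLastD_eq_getLast?]
        have := List.getLast?_cons (a := p) (l := t)
        rw [this] at ha
        exact Option.some.inj ha
      simp only [List.cons_append, TI, chainSum_append, h]
      ring

private lemma finite_lists : ∀ m : ℕ,
    {L : List ℕ | L.length = m ∧ ∀ x ∈ L, x = 1 ∨ x = 2}.Finite := by
  intro m
  induction m with
  | zero =>
      apply Set.Finite.subset (Set.finite_singleton ([] : List ℕ))
      rintro L ⟨h1, _⟩
      simp [List.length_eq_zero_iff.mp h1]
  | succ m ih =>
      apply Set.Finite.subset (Set.Finite.image2 List.cons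
        ((Set.finite_singleton 2).insert 1) ih)
      rintro L ⟨h1, h2⟩
      cases L with
      | nil => simp at h1
      | cons x t =>
          refine Set.mem_image2_of_mem ?_ ?_
          · rcases h2 x (by simp) with h | h <;> simp [h]
          · exact ⟨by simpa using h1, fun y hy => h2 y (by simp [hy])⟩

private lemma valueSet_finite (f : ℕ → ℕ → ℝ) (n i : ℕ) :
    {t : ℝ | ∃ L, ValidLinks n L ∧ L.getLast? = some i ∧ TI f L = t}.Finite := by
  apply Set.Finite.subset ((finite_lists (n - 2)).image (TI f))
  rintro t ⟨L, ⟨h1, h2⟩, _, rfl⟩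
  exact ⟨L, ⟨h1, h2⟩, rfl⟩

private lemma le_Mmax (f : ℕ → ℕ → ℝ) (n i : ℕ) (L : List ℕ)
    (hL : ValidLinks n L) (hlast : L.getLast? = some i) :
    TI f L ≤ Mmax f n i :=
  le_csSup (valueSet_finite f n i).bddAbove ⟨L, hL, hlast, rfl⟩

private lemma Mmax_mem (f : ℕ → ℕ → ℝ) (n i : ℕ)
    (hne : {t : ℝ | ∃ L, ValidLinks n L ∧ L.getLast? = some i ∧ TI f L = t}.Nonempty) :
    ∃ L, ValidLinks n L ∧ L.getLast? = some i ∧ TI f L = Mmax f n i := by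
  have h := hne.csSup_mem (valueSet_finite f n i)
  exact h

/-- every prefix of a maximizing link vector is maximizing for its
own subproblem.  Here the prefix `(L_3, …, L_j)` is `L.take (j - 2)` and the
link `L_j` is `L.getD (j - 3) 1`. -/
theorem stmt3 (f : ℕ → ℕ → ℝ) (hsym : ∀ x y, f x y = f y x)
    (n : ℕ) (hn : 4 ≤ n) (i : ℕ) (hi : i = 1 ∨ i = 2)
    (L : List ℕ) (hL : ValidLinks n L) (hlast : L.getLast? = some i)
    (hmax : TI f L = Mmax f n i) :
    ∀ j, 3 ≤ j → j ≤ n - 1 →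
      TI f (L.take (j - 2)) = Mmax f j (L.getD (j - 3) 1) := by
  intro j hj3 hjn
  obtain ⟨hlen, hmem⟩ := hL
  set k := j - 2 with hk
  have hk1 : 1 ≤ k := by omega
  have hkL : k ≤ L.length := by omega
  have hkL' : k < L.length := by omega
  set P := L.take k with hP
  set S := L.drop k with hS
  have hPS : P ++ S = L := List.take_append_drop k L
  have hPlen : P.length = k := by simp [hP, hkL]
  have hk1lt : k - 1 < L.length := by omega
  set a := L.getD (j - 3) 1 with ha
  have hj3k : j - 3 = k - 1 := by omega
  have haget : a = L.get ⟨k - 1, hk1lt⟩ := by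
    rw [ha, hj3k, List.getD_eq_getElem?_getD, List.getElem?_eq_getElem hk1lt]
    rfl
  have hPlast : P.getLast? = some a := by
    rw [List.getLast?_eq_getElem?, hPlen]
    rw [hP, List.getElem?_take_of_lt (by omega : k - 1 < k)]
    rw [List.getElem?_eq_getElem hk1lt, haget]
    rfl
  have hSne : S ≠ [] := by
    have : S.length = L.length - k := by simp [hS]
    intro hnil
    rw [hnil] at this
    simp at this
    omega
  have hSlast : S.getLast? = some i := by
    have := List.getLast?_append_of_ne_nil P hSne
    rw [hPS] at this
    rw [← this, hlast]
  -- P is valid for j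
  have hPvalid : ValidLinks j P := by
    refine ⟨by omega, fun x hx => hmem x (List.mem_of_mem_take hx)⟩
  have hPle : TI f P ≤ Mmax f j a := le_Mmax f j a P hPvalid hPlast
  -- Mmax f j a is achieved
  obtain ⟨P', hP'valid, hP'last, hP'max⟩ :=
    Mmax_mem f j a ⟨TI f P, P, hPvalid, hPlast, rfl⟩
  -- the spliced chain
  have hL'valid : ValidLinks n (P' ++ S) := by
    constructor
    · rw [List.length_append, hP'valid.1]
      have : S.length = L.length - k := by simp [hS]
      omega
    · intro x hx
      rcases List.mem_append.mp hx with h | h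
      · exact hP'valid.2 x h
      · exact hmem x (List.mem_of_mem_drop h)
  have hL'last : (P' ++ S).getLast? = some i := by
    rw [List.getLast?_append_of_ne_nil P' hSne, hSlast]
  have hL'le : TI f (P' ++ S) ≤ Mmax f n i := le_Mmax f n i _ hL'valid hL'last
  have hTIL : TI f L = TI f P + chainSum f a S := by
    rw [← hPS]; exact TI_append f P S a hPlast
  have hTIL' : TI f (P' ++ S) = TI f P' + chainSum f a S :=
    TI_append f P' S a hP'last
  -- conclude
  by_contra hne
  have hlt : TI f P < Mmax f j a := lt_of_le_of_ne hPle hne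
  have : Mmax f n i < Mmax f n i := by
    calc Mmax f n i = TI f P + chainSum f a S := by rw [← hmax, hTIL]
    _ < TI f P' + chainSum f a S := by rw [hP'max]; linarith
    _ = TI f (P' ++ S) := hTIL'.symm
    _ ≤ Mmax f n i := hL'le
  exact lt_irrefl _ this

end
end

section
/- Let f be a symmetric real-valued function on pairs of positive integers, n ≥ 4, i ∈ {1,2}, and j ∈ {3, …, n−1}. Then the following are equivalent: (1) there is a maximizing link vector L = (L_3, …, L_{n−1}, i) for M_f(n,i) such that every maximizing link vector for M_f(n,i) agrees with L in positions j+1, …, n, and at least two maximizing link vectors differ in position j; (2) there is a maximizing link vector L = (L_3, …, L_{n−1}, i) for M_f(n,i) with n_t(n,i) = n_t(n−1, L_{n−1}) = ⋯ = n_t(j+1, L_{j+1}) = 1 + n_t(j,1) + n_t(j,2). -/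
noncomputable section
open Classical

namespace Stmt5Aux

variable (f : ℕ → ℕ → ℝ)

def Sset (n i : ℕ) : Set ℝ :=
  {t : ℝ | ∃ L, ValidLinks n L ∧ L.getLast? = some i ∧ TI f L = t}

lemma Mmax_eq_sSup (n i : ℕ) : Mmax f n i = sSup (Sset f n i) := rfl

lemma chainSum_concat (a : ℕ) (t : List ℕ) (b : ℕ) :
    chainSum f a (t ++ [b]) = chainSum f a t + gpair f (t.getLastD a) b := by
  induction t generalizing a with
  | nil => simp [chainSum]
  | cons c t ih =>
    have h := ih c
    simp only [List.cons_append, chainSum, List.getLastD_cons, List.append_eq] at h ⊢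
    rw [h]; ring

lemma TI_concat (a : ℕ) (M : List ℕ) (b : ℕ) (hM : M.getLast? = some a) :
    TI f (M ++ [b]) = TI f M + gpair f a b := by
  cases M with
  | nil => simp at hM
  | cons c t =>
    have hlast : t.getLastD c = a := by
      have h1 : (c :: t).getLastD 0 = t.getLastD c := List.getLastD_cons
      rw [List.getLastD_eq_getLast?, hM] at h1
      exact h1.symm
    show TI f (c :: (t ++ [b])) = _
    simp only [TI, chainSum_concat, hlast]
    ring

lemma validLinks_concat {n : ℕ} (hn : 3 ≤ n) {M : List ℕ} (hM : ValidLinks n M)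
    {i : ℕ} (hi : i = 1 ∨ i = 2) : ValidLinks (n + 1) (M ++ [i]) := by
  constructor
  · simp [hM.1]; omega
  · intro x hx
    rcases List.mem_append.1 hx with h | h
    · exact hM.2 x h
    · simp at h; subst h; exact hi

lemma validLinks_decomp {n : ℕ} (hn : 3 ≤ n) {L : List ℕ} (hL : ValidLinks (n + 1) L)
    {i : ℕ} (hlast : L.getLast? = some i) :
    ∃ M a, L = M ++ [i] ∧ ValidLinks n M ∧ M.getLast? = some a ∧ (a = 1 ∨ a = 2) := by
  rcases List.eq_nil_or_concat L with rfl | ⟨M, b, hMb⟩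
  · simp [ValidLinks] at hL; omega
  · rw [List.concat_eq_append] at hMb
    subst hMb
    rw [List.getLast?_concat] at hlast
    have hbi : b = i := Option.some.inj hlast
    subst hbi
    have hlenM : M.length = n - 2 := by
      have := hL.1; simp at this; omega
    have hMne : M ≠ [] := by
      intro h; subst h; simp at hlenM; omega
    obtain ⟨a, ha⟩ : ∃ a, M.getLast? = some a := by
      cases M with
      | nil => exact absurd rfl hMne
      | cons c t => exact ⟨(c :: t).getLast (by simp), List.getLast?_eq_getLast _⟩
    have hmemM : ∀ x ∈ M, x = 1 ∨ x = 2 := fun x hx => hL.2 x (List.mem_append.2 (Or.inl hx))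
    have haM : a ∈ M := by
      rw [List.getLast?_eq_getElem?] at ha
      exact List.mem_of_getElem? ha
    exact ⟨M, a, rfl, ⟨hlenM, hmemM⟩, ha, hmemM a haM⟩

lemma Sset_three {i : ℕ} (hi : i = 1 ∨ i = 2) : Sset f 3 i = {cst f + gone f i} := by
  ext t
  constructor
  · rintro ⟨L, ⟨hlen, hmem⟩, hlast, rfl⟩
    obtain ⟨a, rfl⟩ : ∃ a, L = [a] := by
      cases L with
      | nil => simp at hlen
      | cons c t =>
        cases t with
        | nil => exact ⟨c, rfl⟩
        | cons d t => simp at hlen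
    simp at hlast
    subst hlast
    simp [TI, chainSum]
  · rintro rfl
    exact ⟨[i], ⟨rfl, by simpa using hi⟩, by simp, by simp [TI, chainSum]⟩

lemma Sset_succ {n : ℕ} (hn : 3 ≤ n) {i : ℕ} (hi : i = 1 ∨ i = 2) :
    Sset f (n + 1) i =
      (fun t => t + gpair f 1 i) '' Sset f n 1 ∪ (fun t => t + gpair f 2 i) '' Sset f n 2 := by
  ext t
  constructor
  · rintro ⟨L, hL, hlast, rfl⟩
    obtain ⟨M, a, rfl, hM, hMa, ha⟩ := validLinks_decomp hn hL hlast
    have hTI := TI_concat f a M i hMa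
    rcases ha with rfl | rfl
    · exact Or.inl ⟨TI f M, ⟨M, hM, hMa, rfl⟩, hTI.symm⟩
    · exact Or.inr ⟨TI f M, ⟨M, hM, hMa, rfl⟩, hTI.symm⟩
  · rintro (⟨t', ⟨M, hM, hMa, rfl⟩, rfl⟩ | ⟨t', ⟨M, hM, hMa, rfl⟩, rfl⟩)
    · exact ⟨M ++ [i], validLinks_concat hn hM hi, List.getLast?_concat,
        TI_concat f 1 M i hMa⟩
    · exact ⟨M ++ [i], validLinks_concat hn hM hi, List.getLast?_concat,
        TI_concat f 2 M i hMa⟩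

lemma isGreatest_shift {A : Set ℝ} {a c : ℝ} (h : IsGreatest A a) :
    IsGreatest ((fun t => t + c) '' A) (a + c) := by
  constructor
  · exact ⟨a, h.1, rfl⟩
  · rintro x ⟨y, hy, rfl⟩
    exact add_le_add_left (h.2 hy) _

lemma isGreatest_Mmax : ∀ {n : ℕ}, 3 ≤ n → ∀ {i : ℕ}, i = 1 ∨ i = 2 →
    IsGreatest (Sset f n i) (Mmax f n i) := by
  intro n hn
  induction n, hn using Nat.le_induction with
  | base =>
    intro i hi
    rw [Mmax_eq_sSup, Sset_three f hi, csSup_singleton]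
    exact ⟨rfl, fun x hx => le_of_eq hx⟩
  | succ n hn ih =>
    intro i hi
    have h1 := ih (i := 1) (Or.inl rfl)
    have h2 := ih (i := 2) (Or.inr rfl)
    have hU : IsGreatest (Sset f (n + 1) i)
        ((Mmax f n 1 + gpair f 1 i) ⊔ (Mmax f n 2 + gpair f 2 i)) := by
      rw [Sset_succ f hn hi]
      exact (isGreatest_shift h1).union (isGreatest_shift h2)
    rw [Mmax_eq_sSup, hU.csSup_eq]
    exact hU

lemma Mmax_succ {n : ℕ} (hn : 3 ≤ n) {i : ℕ} (hi : i = 1 ∨ i = 2) :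
    Mmax f (n + 1) i = max (Mmax f n 1 + gpair f 1 i) (Mmax f n 2 + gpair f 2 i) := by
  have h1 := isGreatest_Mmax f hn (i := 1) (Or.inl rfl)
  have h2 := isGreatest_Mmax f hn (i := 2) (Or.inr rfl)
  have hU : IsGreatest (Sset f (n + 1) i)
      ((Mmax f n 1 + gpair f 1 i) ⊔ (Mmax f n 2 + gpair f 2 i)) := by
    rw [Sset_succ f hn hi]
    exact (isGreatest_shift h1).union (isGreatest_shift h2)
  rw [Mmax_eq_sSup, hU.csSup_eq]

def IsMaxer (n i : ℕ) (L : List ℕ) : Prop :=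
  ValidLinks n L ∧ L.getLast? = some i ∧ TI f L = Mmax f n i

lemma exists_isMaxer {n : ℕ} (hn : 3 ≤ n) {i : ℕ} (hi : i = 1 ∨ i = 2) :
    ∃ L, IsMaxer f n i L := by
  obtain ⟨L, h1, h2, h3⟩ := (isGreatest_Mmax f hn hi).1
  exact ⟨L, h1, h2, h3⟩

lemma TI_le_Mmax {n : ℕ} (hn : 3 ≤ n) {i : ℕ} (hi : i = 1 ∨ i = 2) {L : List ℕ}
    (hL : ValidLinks n L) (hlast : L.getLast? = some i) : TI f L ≤ Mmax f n i :=
  (isGreatest_Mmax f hn hi).2 ⟨L, hL, hlast, rfl⟩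

lemma isMaxer_decomp {n : ℕ} (hn : 3 ≤ n) {i : ℕ} (hi : i = 1 ∨ i = 2) {L : List ℕ} :
    IsMaxer f (n + 1) i L ↔ ∃ M a, (a = 1 ∨ a = 2) ∧ L = M ++ [i] ∧ IsMaxer f n a M ∧
      Mmax f n a + gpair f a i = Mmax f (n + 1) i := by
  constructor
  · rintro ⟨hL, hlast, hTI⟩
    obtain ⟨M, a, rfl, hM, hMa, ha⟩ := validLinks_decomp hn hL hlast
    have hTIc := TI_concat f a M i hMa
    have hle1 : TI f M ≤ Mmax f n a := TI_le_Mmax f hn ha hM hMa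
    have hle2 : Mmax f n a + gpair f a i ≤ Mmax f (n + 1) i := by
      rw [Mmax_succ f hn hi]
      rcases ha with rfl | rfl
      · exact le_max_left _ _
      · exact le_max_right _ _
    have key : TI f M = Mmax f n a ∧ Mmax f n a + gpair f a i = Mmax f (n + 1) i := by
      constructor <;> nlinarith [hTIc, hTI]
    exact ⟨M, a, ha, rfl, ⟨hM, hMa, key.1⟩, key.2⟩
  · rintro ⟨M, a, ha, rfl, ⟨hM, hMa, hTI⟩, heq⟩
    refine ⟨validLinks_concat hn hM hi, List.getLast?_concat, ?_⟩
    rw [TI_concat f a M i hMa, hTI, heq]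

lemma nt_succ {n : ℕ} (hn : 3 ≤ n) (i : ℕ) :
    nt f (n + 1) i =
      if Mmax f n 1 + gpair f 1 i = Mmax f n 2 + gpair f 2 i then
        1 + nt f n 1 + nt f n 2
      else if Mmax f n 1 + gpair f 1 i > Mmax f n 2 + gpair f 2 i then
        nt f n 1
      else nt f n 2 := by
  obtain ⟨m, rfl⟩ : ∃ m, n = m + 3 := ⟨n - 3, by omega⟩
  rfl

lemma getD_last {L : List ℕ} {i : ℕ} (h : L.getLast? = some i) :
    L.getD (L.length - 1) 1 = i := by
  rw [List.getD_eq_getElem?_getD, ← List.getLast?_eq_getElem?, h]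
  rfl

lemma getD_concat_length {M : List ℕ} {i : ℕ} :
    (M ++ [i]).getD M.length 1 = i := by
  rw [List.getD_eq_getElem?_getD, List.getElem?_concat_length]
  rfl

lemma getD_mem {n : ℕ} {L : List ℕ} (hL : ValidLinks n L) {k : ℕ} (hk : k < L.length) :
    L.getD k 1 = 1 ∨ L.getD k 1 = 2 := by
  rw [List.getD_eq_getElem L 1 hk]
  exact hL.2 _ (List.getElem_mem hk)


lemma getD_pos_last {n : ℕ} (hn : 3 ≤ n) {M : List ℕ} {a : ℕ}
    (hM : ValidLinks n M) (hMa : M.getLast? = some a) : M.getD (n - 3) 1 = a := by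
  have h := getD_last hMa
  rw [hM.1] at h
  have he : n - 2 - 1 = n - 3 := by omega
  rwa [he] at h

lemma getD_concat_lt {M : List ℕ} {i k : ℕ} (h : k < M.length) :
    (M ++ [i]).getD k 1 = M.getD k 1 := List.getD_append M [i] 1 k h

lemma Mmax_succ_strict {n : ℕ} (hn : 3 ≤ n) {i a b : ℕ} (hi : i = 1 ∨ i = 2)
    (ha : a = 1 ∨ a = 2) (hb : b = 1 ∨ b = 2) (hab : a ≠ b)
    (hw : Mmax f n b + gpair f b i < Mmax f n a + gpair f a i) :
    Mmax f (n + 1) i = Mmax f n a + gpair f a i := by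
  rw [Mmax_succ f hn hi]
  rcases ha with rfl | rfl <;> rcases hb with rfl | rfl
  · exact absurd rfl hab
  · exact max_eq_left (le_of_lt hw)
  · exact max_eq_right (le_of_lt hw)
  · exact absurd rfl hab

lemma isMaxer_strict_decomp {n : ℕ} (hn : 3 ≤ n) {i a b : ℕ} (hi : i = 1 ∨ i = 2)
    (ha : a = 1 ∨ a = 2) (hb : b = 1 ∨ b = 2) (hab : a ≠ b)
    (hw : Mmax f n b + gpair f b i < Mmax f n a + gpair f a i) {L : List ℕ}
    (hL : IsMaxer f (n + 1) i L) : ∃ M, L = M ++ [i] ∧ IsMaxer f n a M := by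
  obtain ⟨M, c, hc, rfl, hM, heq⟩ := (isMaxer_decomp f hn hi).1 hL
  have hca : c = a := by
    by_contra hne
    have hcb : c = b := by rcases hc with rfl | rfl <;> rcases ha with rfl | rfl <;>
      rcases hb with rfl | rfl <;> omega
    subst hcb
    rw [Mmax_succ_strict f hn hi ha hb hab hw] at heq
    linarith
  subst hca
  exact ⟨M, rfl, hM⟩

lemma isMaxer_strict_concat {n : ℕ} (hn : 3 ≤ n) {i a b : ℕ} (hi : i = 1 ∨ i = 2)
    (ha : a = 1 ∨ a = 2) (hb : b = 1 ∨ b = 2) (hab : a ≠ b)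
    (hw : Mmax f n b + gpair f b i < Mmax f n a + gpair f a i) {M : List ℕ}
    (hM : IsMaxer f n a M) : IsMaxer f (n + 1) i (M ++ [i]) :=
  (isMaxer_decomp f hn hi).2
    ⟨M, a, ha, rfl, hM, (Mmax_succ_strict f hn hi ha hb hab hw).symm⟩

lemma nt_succ_strict {n i a b : ℕ} (hn : 3 ≤ n) (ha : a = 1 ∨ a = 2) (hb : b = 1 ∨ b = 2)
    (hab : a ≠ b) (hw : Mmax f n b + gpair f b i < Mmax f n a + gpair f a i) :
    nt f (n + 1) i = nt f n a := by
  rw [nt_succ f hn i]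
  rcases ha with rfl | rfl <;> rcases hb with rfl | rfl
  · exact absurd rfl hab
  · have h1 : ¬ (Mmax f n 1 + gpair f 1 i = Mmax f n 2 + gpair f 2 i) := by
      intro h; linarith
    rw [if_neg h1, if_pos hw]
  · have h1 : ¬ (Mmax f n 1 + gpair f 1 i = Mmax f n 2 + gpair f 2 i) := by
      intro h; linarith
    have h2 : ¬ (Mmax f n 1 + gpair f 1 i > Mmax f n 2 + gpair f 2 i) := by
      intro h; linarith
    rw [if_neg h1, if_neg h2]
  · exact absurd rfl hab

def P (n i j : ℕ) : Prop :=
  ∃ L, IsMaxer f n i L ∧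
    (∀ L', IsMaxer f n i L' → ∀ k, j + 1 ≤ k → k ≤ n → L'.getD (k - 3) 1 = L.getD (k - 3) 1) ∧
    (∃ L1 L2, IsMaxer f n i L1 ∧ IsMaxer f n i L2 ∧ L1.getD (j - 3) 1 ≠ L2.getD (j - 3) 1)

def Q (n i j : ℕ) : Prop :=
  ∃ L, IsMaxer f n i L ∧
    ∀ k, j + 1 ≤ k → k ≤ n → nt f k (L.getD (k - 3) 1) = 1 + nt f j 1 + nt f j 2

lemma P_notie {n j i : ℕ} (hn : 3 ≤ n) (hj : 3 ≤ j) (hjn : j + 1 ≤ n) (hi : i = 1 ∨ i = 2)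
    (hP : P f (n + 1) i j) : Mmax f n 1 + gpair f 1 i ≠ Mmax f n 2 + gpair f 2 i := by
  intro htie
  obtain ⟨L, hL, hAg, -⟩ := hP
  obtain ⟨M1, hM1⟩ := exists_isMaxer f hn (Or.inl rfl)
  obtain ⟨M2, hM2⟩ := exists_isMaxer f hn (Or.inr rfl)
  have hmax : Mmax f (n + 1) i = Mmax f n 1 + gpair f 1 i := by
    rw [Mmax_succ f hn hi, htie, max_self]
  have hL1 : IsMaxer f (n + 1) i (M1 ++ [i]) :=
    (isMaxer_decomp f hn hi).2 ⟨M1, 1, Or.inl rfl, rfl, hM1, hmax.symm⟩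
  have hL2 : IsMaxer f (n + 1) i (M2 ++ [i]) :=
    (isMaxer_decomp f hn hi).2 ⟨M2, 2, Or.inr rfl, rfl, hM2, by rw [hmax, htie]⟩
  have e1 : (M1 ++ [i]).getD (n - 3) 1 = 1 := by
    rw [getD_concat_lt (by rw [hM1.1.1]; omega)]
    exact getD_pos_last hn hM1.1 hM1.2.1
  have e2 : (M2 ++ [i]).getD (n - 3) 1 = 2 := by
    rw [getD_concat_lt (by rw [hM2.1.1]; omega)]
    exact getD_pos_last hn hM2.1 hM2.2.1
  have h1 := hAg _ hL1 n (by omega) (by omega)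
  have h2 := hAg _ hL2 n (by omega) (by omega)
  rw [e1] at h1
  rw [e2] at h2
  omega

lemma Q_notie {n j i : ℕ} (hn : 3 ≤ n) (hj : 3 ≤ j) (hjn : j + 1 ≤ n) (hi : i = 1 ∨ i = 2)
    (hQ : Q f (n + 1) i j) : Mmax f n 1 + gpair f 1 i ≠ Mmax f n 2 + gpair f 2 i := by
  intro htie
  obtain ⟨L, hL, hnt⟩ := hQ
  have hkn1 := hnt (n + 1) (by omega) le_rfl
  have hkn := hnt n (by omega) (by omega)
  rw [getD_pos_last (by omega) hL.1 hL.2.1] at hkn1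
  rw [nt_succ f hn i, if_pos htie] at hkn1
  have hb : L.getD (n - 3) 1 = 1 ∨ L.getD (n - 3) 1 = 2 :=
    getD_mem hL.1 (by rw [hL.1.1]; omega)
  rcases hb with hb | hb <;> rw [hb] at hkn <;> omega

lemma base_P {j i : ℕ} (hj : 3 ≤ j) (hi : i = 1 ∨ i = 2) :
    P f (j + 1) i j ↔ Mmax f j 1 + gpair f 1 i = Mmax f j 2 + gpair f 2 i := by
  constructor
  · rintro ⟨L, hL, hAg, L1, L2, hL1, hL2, hne⟩
    obtain ⟨M1, a1, ha1, rfl, hM1, heq1⟩ := (isMaxer_decomp f hj hi).1 hL1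
    obtain ⟨M2, a2, ha2, rfl, hM2, heq2⟩ := (isMaxer_decomp f hj hi).1 hL2
    have e1 : (M1 ++ [i]).getD (j - 3) 1 = a1 := by
      rw [getD_concat_lt (by rw [hM1.1.1]; omega)]
      exact getD_pos_last hj hM1.1 hM1.2.1
    have e2 : (M2 ++ [i]).getD (j - 3) 1 = a2 := by
      rw [getD_concat_lt (by rw [hM2.1.1]; omega)]
      exact getD_pos_last hj hM2.1 hM2.2.1
    rw [e1, e2] at hne
    rcases ha1 with rfl | rfl <;> rcases ha2 with rfl | rfl
    · exact absurd rfl hne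
    · rw [heq1, heq2]
    · rw [heq2, heq1]
    · exact absurd rfl hne
  · intro htie
    obtain ⟨M1, hM1⟩ := exists_isMaxer f hj (Or.inl rfl)
    obtain ⟨M2, hM2⟩ := exists_isMaxer f hj (Or.inr rfl)
    have hmax : Mmax f (j + 1) i = Mmax f j 1 + gpair f 1 i := by
      rw [Mmax_succ f hj hi, htie, max_self]
    have hL1 : IsMaxer f (j + 1) i (M1 ++ [i]) :=
      (isMaxer_decomp f hj hi).2 ⟨M1, 1, Or.inl rfl, rfl, hM1, hmax.symm⟩
    have hL2 : IsMaxer f (j + 1) i (M2 ++ [i]) :=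
      (isMaxer_decomp f hj hi).2 ⟨M2, 2, Or.inr rfl, rfl, hM2, by rw [hmax, htie]⟩
    refine ⟨M1 ++ [i], hL1, ?_, M1 ++ [i], M2 ++ [i], hL1, hL2, ?_⟩
    · intro L' hL' k hk1 hk2
      have hkj : k = j + 1 := by omega
      subst hkj
      rw [getD_pos_last (by omega) hL'.1 hL'.2.1,
        getD_pos_last (by omega) hL1.1 hL1.2.1]
    · have e1 : (M1 ++ [i]).getD (j - 3) 1 = 1 := by
        rw [getD_concat_lt (by rw [hM1.1.1]; omega)]
        exact getD_pos_last hj hM1.1 hM1.2.1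
      have e2 : (M2 ++ [i]).getD (j - 3) 1 = 2 := by
        rw [getD_concat_lt (by rw [hM2.1.1]; omega)]
        exact getD_pos_last hj hM2.1 hM2.2.1
      rw [e1, e2]
      omega

lemma base_Q {j i : ℕ} (hj : 3 ≤ j) (hi : i = 1 ∨ i = 2) :
    Q f (j + 1) i j ↔ Mmax f j 1 + gpair f 1 i = Mmax f j 2 + gpair f 2 i := by
  constructor
  · rintro ⟨L, hL, hnt⟩
    have h := hnt (j + 1) le_rfl le_rfl
    rw [getD_pos_last (by omega) hL.1 hL.2.1] at h
    rw [nt_succ f hj i] at h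
    by_contra hne
    rw [if_neg hne] at h
    split at h <;> omega
  · intro htie
    obtain ⟨L, hL⟩ := exists_isMaxer f (by omega : 3 ≤ j + 1) hi
    refine ⟨L, hL, ?_⟩
    intro k hk1 hk2
    have hkj : k = j + 1 := by omega
    subst hkj
    rw [getD_pos_last (by omega) hL.1 hL.2.1, nt_succ f hj i, if_pos htie]

lemma step_P {n j i a b : ℕ} (hn : 3 ≤ n) (hj : 3 ≤ j) (hjn : j + 1 ≤ n)
    (hi : i = 1 ∨ i = 2) (ha : a = 1 ∨ a = 2) (hb : b = 1 ∨ b = 2) (hab : a ≠ b)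
    (hw : Mmax f n b + gpair f b i < Mmax f n a + gpair f a i) :
    P f (n + 1) i j ↔ P f n a j := by
  constructor
  · rintro ⟨L, hL, hAg, L1, L2, hL1, hL2, hne⟩
    obtain ⟨M, rfl, hM⟩ := isMaxer_strict_decomp f hn hi ha hb hab hw hL
    obtain ⟨M1, rfl, hM1⟩ := isMaxer_strict_decomp f hn hi ha hb hab hw hL1
    obtain ⟨M2, rfl, hM2⟩ := isMaxer_strict_decomp f hn hi ha hb hab hw hL2
    refine ⟨M, hM, ?_, M1, M2, hM1, hM2, ?_⟩
    · intro M' hM' k hk1 hk2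
      have h := hAg (M' ++ [i]) (isMaxer_strict_concat f hn hi ha hb hab hw hM') k hk1
        (by omega)
      rwa [getD_concat_lt (by rw [hM'.1.1]; omega),
        getD_concat_lt (by rw [hM.1.1]; omega)] at h
    · rwa [getD_concat_lt (by rw [hM1.1.1]; omega),
        getD_concat_lt (by rw [hM2.1.1]; omega)] at hne
  · rintro ⟨M, hM, hAg, M1, M2, hM1, hM2, hne⟩
    have hLM := isMaxer_strict_concat f hn hi ha hb hab hw hM
    refine ⟨M ++ [i], hLM, ?_, M1 ++ [i], M2 ++ [i],
      isMaxer_strict_concat f hn hi ha hb hab hw hM1,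
      isMaxer_strict_concat f hn hi ha hb hab hw hM2, ?_⟩
    · intro L' hL' k hk1 hk2
      obtain ⟨M', rfl, hM'⟩ := isMaxer_strict_decomp f hn hi ha hb hab hw hL'
      by_cases hk : k = n + 1
      · subst hk
        have hLM' := isMaxer_strict_concat f hn hi ha hb hab hw hM'
        rw [getD_pos_last (by omega) hLM'.1 hLM'.2.1,
          getD_pos_last (by omega) hLM.1 hLM.2.1]
      · rw [getD_concat_lt (by rw [hM'.1.1]; omega),
          getD_concat_lt (by rw [hM.1.1]; omega)]
        exact hAg M' hM' k hk1 (by omega)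
    · rw [getD_concat_lt (by rw [hM1.1.1]; omega),
        getD_concat_lt (by rw [hM2.1.1]; omega)]
      exact hne

lemma step_Q {n j i a b : ℕ} (hn : 3 ≤ n) (hj : 3 ≤ j) (hjn : j + 1 ≤ n)
    (hi : i = 1 ∨ i = 2) (ha : a = 1 ∨ a = 2) (hb : b = 1 ∨ b = 2) (hab : a ≠ b)
    (hw : Mmax f n b + gpair f b i < Mmax f n a + gpair f a i) :
    Q f (n + 1) i j ↔ Q f n a j := by
  constructor
  · rintro ⟨L, hL, hnt⟩
    obtain ⟨M, rfl, hM⟩ := isMaxer_strict_decomp f hn hi ha hb hab hw hL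
    refine ⟨M, hM, ?_⟩
    intro k hk1 hk2
    have h := hnt k hk1 (by omega)
    rwa [getD_concat_lt (by rw [hM.1.1]; omega)] at h
  · rintro ⟨M, hM, hnt⟩
    have hLM := isMaxer_strict_concat f hn hi ha hb hab hw hM
    refine ⟨M ++ [i], hLM, ?_⟩
    intro k hk1 hk2
    by_cases hk : k = n + 1
    · subst hk
      rw [getD_pos_last (by omega) hLM.1 hLM.2.1]
      rw [nt_succ_strict f hn ha hb hab hw]
      have h := hnt n (by omega) le_rfl
      rwa [getD_pos_last hn hM.1 hM.2.1] at h
    · rw [getD_concat_lt (by rw [hM.1.1]; omega)]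
      exact hnt k hk1 (by omega)

lemma main_aux : ∀ d n i j, 3 ≤ j → (i = 1 ∨ i = 2) → n = j + 1 + d →
    (P f n i j ↔ Q f n i j) := by
  intro d
  induction d with
  | zero =>
    intro n i j hj hi hn
    subst hn
    rw [base_P f hj hi, base_Q f hj hi]
  | succ d ih =>
    intro n i j hj hi hn
    obtain ⟨m, rfl⟩ : ∃ m, n = m + 1 := ⟨j + 1 + d, by omega⟩
    have hm : 3 ≤ m := by omega
    have hjm : j + 1 ≤ m := by omega
    have hmd : m = j + 1 + d := by omega
    constructor
    · intro hP
      have hne := P_notie f hm hj hjm hi hP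
      rcases lt_trichotomy (Mmax f m 1 + gpair f 1 i) (Mmax f m 2 + gpair f 2 i) with
        hlt | heq | hgt
      · have hP' := (step_P f hm hj hjm hi (Or.inr rfl) (Or.inl rfl) (by omega) hlt).1 hP
        have hQ' := (ih m 2 j hj (Or.inr rfl) hmd).1 hP'
        exact (step_Q f hm hj hjm hi (Or.inr rfl) (Or.inl rfl) (by omega) hlt).2 hQ'
      · exact absurd heq hne
      · have hP' := (step_P f hm hj hjm hi (Or.inl rfl) (Or.inr rfl) (by omega) hgt).1 hP
        have hQ' := (ih m 1 j hj (Or.inl rfl) hmd).1 hP'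
        exact (step_Q f hm hj hjm hi (Or.inl rfl) (Or.inr rfl) (by omega) hgt).2 hQ'
    · intro hQ
      have hne := Q_notie f hm hj hjm hi hQ
      rcases lt_trichotomy (Mmax f m 1 + gpair f 1 i) (Mmax f m 2 + gpair f 2 i) with
        hlt | heq | hgt
      · have hQ' := (step_Q f hm hj hjm hi (Or.inr rfl) (Or.inl rfl) (by omega) hlt).1 hQ
        have hP' := (ih m 2 j hj (Or.inr rfl) hmd).2 hQ'
        exact (step_P f hm hj hjm hi (Or.inr rfl) (Or.inl rfl) (by omega) hlt).2 hP'
      · exact absurd heq hne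
      · have hQ' := (step_Q f hm hj hjm hi (Or.inl rfl) (Or.inr rfl) (by omega) hgt).1 hQ
        have hP' := (ih m 1 j hj (Or.inl rfl) hmd).2 hQ'
        exact (step_P f hm hj hjm hi (Or.inl rfl) (Or.inr rfl) (by omega) hgt).2 hP'

end Stmt5Aux

/-- all maximizers share exactly the last `n - j` links iff the tie
counts stabilize from position `j + 1` up to `n` at value `1 + n_t(j,1) + n_t(j,2)`.
Position `k ∈ {3, …, n}` of a link vector `L` is `L.getD (k - 3) 1`. -/
theorem stmt5 (f : ℕ → ℕ → ℝ) (hsym : ∀ x y, f x y = f y x)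
    (n : ℕ) (hn : 4 ≤ n) (i : ℕ) (hi : i = 1 ∨ i = 2)
    (j : ℕ) (hj1 : 3 ≤ j) (hj2 : j ≤ n - 1) :
    (∃ L, ValidLinks n L ∧ L.getLast? = some i ∧ TI f L = Mmax f n i ∧
        (∀ L', ValidLinks n L' → L'.getLast? = some i → TI f L' = Mmax f n i →
          ∀ k, j + 1 ≤ k → k ≤ n → L'.getD (k - 3) 1 = L.getD (k - 3) 1) ∧
        (∃ L1 L2,
          (ValidLinks n L1 ∧ L1.getLast? = some i ∧ TI f L1 = Mmax f n i) ∧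
          (ValidLinks n L2 ∧ L2.getLast? = some i ∧ TI f L2 = Mmax f n i) ∧
          L1.getD (j - 3) 1 ≠ L2.getD (j - 3) 1))
    ↔ (∃ L, ValidLinks n L ∧ L.getLast? = some i ∧ TI f L = Mmax f n i ∧
        ∀ k, j + 1 ≤ k → k ≤ n →
          nt f k (L.getD (k - 3) 1) = 1 + nt f j 1 + nt f j 2) := by

  have key := Stmt5Aux.main_aux f (n - (j + 1)) n i j hj1 hi (by omega)
  constructor
  · rintro ⟨L, h1, h2, h3, hAg, L1, L2, hM1, hM2, hne⟩
    have hP : Stmt5Aux.P f n i j :=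
      ⟨L, ⟨h1, h2, h3⟩, fun L' hL' => hAg L' hL'.1 hL'.2.1 hL'.2.2, L1, L2, hM1, hM2, hne⟩
    obtain ⟨L', hL', hnt⟩ := key.1 hP
    exact ⟨L', hL'.1, hL'.2.1, hL'.2.2, hnt⟩
  · rintro ⟨L, h1, h2, h3, hnt⟩
    have hQ : Stmt5Aux.Q f n i j := ⟨L, ⟨h1, h2, h3⟩, hnt⟩
    obtain ⟨L', hL', hAg, L1, L2, hM1, hM2, hne⟩ := key.2 hQ
    exact ⟨L', hL'.1, hL'.2.1, hL'.2.2, fun L'' v l t => hAg L'' ⟨v, l, t⟩,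
      L1, L2, hM1, hM2, hne⟩


end
end

section
/- Let f be a symmetric real-valued function on pairs of positive integers such that g_f(1,1) > max{ g_f(1,2), g_f(2,2), (g_f(1,2) + g_f(2,1))/2 } and g_f(1,1) > g_f(2). Then for every n ≥ 3, the all-ones link vector (the linear chain Li_n) is the unique maximizer of TI_f among all link vectors in {1,2}^{n−2}. -/
noncomputable section
open Classical

/-- if `g_f(1,1)` dominates and `g_f(1,1) > g_f(2)`, the linear
chain (all-ones link vector) is the unique maximizer of `TI_f` for every `n ≥ 3`. -/
theorem stmt7 (f : ℕ → ℕ → ℝ) (hsym : ∀ x y, f x y = f y x)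
    (hdom : gpair f 1 1 > max (max (gpair f 1 2) (gpair f 2 2)) ((gpair f 1 2 + gpair f 2 1) / 2))
    (hg : gpair f 1 1 > gone f 2) :
    ∀ n, 3 ≤ n → ∀ L, ValidLinks n L → L ≠ List.replicate (n - 2) 1 →
      TI f L < TI f (List.replicate (n - 2) 1) := by
  -- unpack the domination hypotheses
  simp only [gt_iff_lt, max_lt_iff] at hdom
  obtain ⟨⟨hg12, hg22⟩, havg⟩ := hdom
  have hsum : gpair f 1 2 + gpair f 2 1 < 2 * gpair f 1 1 := by linarith
  -- algebraic identity: gone 2 + g21 = g12 + g11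
  have hid : gone f 2 + gpair f 2 1 = gpair f 1 2 + gpair f 1 1 := by
    simp [gone, gpair]; ring
  have hgone1 : gone f 1 = gpair f 1 1 := by simp [gone, gpair]
  -- the potential
  set c : ℝ := max (gpair f 2 1 - gpair f 1 1) 0 with hc
  have hc0 : 0 ≤ c := le_max_right _ _
  have hc1 : gpair f 1 2 + c < gpair f 1 1 := by
    rcases le_total (gpair f 2 1 - gpair f 1 1) 0 with h | h
    · rw [hc, max_eq_right h]; linarith
    · rw [hc, max_eq_left h]; linarith
  have hc2 : gpair f 2 1 ≤ gpair f 1 1 + c := by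
    have := le_max_left (gpair f 2 1 - gpair f 1 1) 0
    linarith
  have hc3 : gone f 2 + c < gpair f 1 1 := by
    rcases le_total (gpair f 2 1 - gpair f 1 1) 0 with h | h
    · rw [hc, max_eq_right h]; linarith
    · rw [hc, max_eq_left h]; linarith
  set φ : ℕ → ℝ := fun a => if a = 2 then c else 0 with hφ
  have hφ0 : ∀ a, 0 ≤ φ a := by
    intro a; simp only [hφ]; split <;> simp [hc0]
  -- step inequality
  have hstep : ∀ a b, (a = 1 ∨ a = 2) → (b = 1 ∨ b = 2) →
      gpair f a b + φ b ≤ gpair f 1 1 + φ a := by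
    rintro a b (rfl | rfl) (rfl | rfl) <;> simp only [hφ] <;> norm_num <;> linarith
  -- weak bound
  have weak : ∀ t : List ℕ, (∀ x ∈ t, x = 1 ∨ x = 2) → ∀ a, (a = 1 ∨ a = 2) →
      chainSum f a t ≤ t.length * gpair f 1 1 + φ a := by
    intro t
    induction t with
    | nil => intro _ a _; simpa [chainSum] using hφ0 a
    | cons b t' ih =>
      intro hmem a ha
      have hb : b = 1 ∨ b = 2 := hmem b (by simp)
      have h1 := ih (fun x hx => hmem x (by simp [hx])) b hb
      have h2 := hstep a b ha hb
      simp only [chainSum, List.length_cons]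
      push_cast
      linarith
  -- strict bound when a 2 occurs
  have strict : ∀ t : List ℕ, (∀ x ∈ t, x = 1 ∨ x = 2) → 2 ∈ t →
      ∀ a, (a = 1 ∨ a = 2) → chainSum f a t < t.length * gpair f 1 1 + φ a := by
    intro t
    induction t with
    | nil => intro _ h; simp at h
    | cons b t' ih =>
      intro hmem h2 a ha
      have hb : b = 1 ∨ b = 2 := hmem b (by simp)
      have hmem' : ∀ x ∈ t', x = 1 ∨ x = 2 := fun x hx => hmem x (by simp [hx])
      by_cases h2' : 2 ∈ t'
      · have h1 := ih hmem' h2' b hb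
        have h2 := hstep a b ha hb
        simp only [chainSum, List.length_cons]
        push_cast
        linarith
      · have hb2 : b = 2 := by
          rcases List.mem_cons.1 h2 with h | h
          · exact h.symm
          · exact absurd h h2'
        subst hb2
        have h1 := weak t' hmem' 2 (Or.inr rfl)
        have h2 : gpair f a 2 + φ 2 < gpair f 1 1 + φ a := by
          rcases ha with rfl | rfl <;> simp only [hφ] <;> norm_num <;> linarith
        simp only [chainSum, List.length_cons]
        push_cast
        simp only [hφ] at h1 h2
        norm_num at h1 h2 ⊢
        linarith
  -- value on the all-ones chain
  have hrep : ∀ m : ℕ, chainSum f 1 (List.replicate m 1) = m * gpair f 1 1 := by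
    intro m
    induction m with
    | zero => simp [chainSum]
    | succ k ih =>
      simp only [List.replicate_succ, chainSum, ih]
      push_cast
      ring
  intro n hn L hL hne
  obtain ⟨hlen, hmem⟩ := hL
  have hlpos : 1 ≤ L.length := by omega
  obtain ⟨a, t, rfl⟩ : ∃ a t, L = a :: t := by
    cases L with
    | nil => simp at hlpos
    | cons a t => exact ⟨a, t, rfl⟩
  have ha : a = 1 ∨ a = 2 := hmem a (by simp)
  have hmemt : ∀ x ∈ t, x = 1 ∨ x = 2 := fun x hx => hmem x (by simp [hx])
  have hn2 : n - 2 = t.length + 1 := by simp at hlen; omega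
  rw [hn2]
  rw [List.replicate_succ]
  have hTIrep : TI f (1 :: List.replicate t.length 1)
      = cst f + gpair f 1 1 + t.length * gpair f 1 1 := by
    simp only [TI, hgone1, hrep]
  rw [hTIrep]
  simp only [TI]
  rcases ha with rfl | rfl
  · -- head is 1, so t must contain a 2
    have h2t : 2 ∈ t := by
      by_contra h2t
      apply hne
      have ht1 : ∀ x ∈ t, x = 1 := by
        intro x hx
        rcases hmemt x hx with h | h
        · exact h
        · exact absurd (h ▸ hx) h2t
      rw [hn2, List.replicate_succ]
      exact congrArg (List.cons 1) (List.eq_replicate_of_mem ht1)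
    have := strict t hmemt h2t 1 (Or.inl rfl)
    simp only [hφ] at this
    norm_num at this
    rw [hgone1]
    linarith
  · have := weak t hmemt 2 (Or.inr rfl)
    simp only [hφ] at this
    norm_num at this
    linarith

end
end

section
/- Let f be a symmetric real-valued function on pairs of positive integers such that g_f(1,1) > max{ g_f(1,2), g_f(2,2), (g_f(1,2) + g_f(2,1))/2 } and g_f(1,1) = g_f(2). Then for every n ≥ 4, the all-ones link vector (the linear chain Li_n) is the unique maximizer of TI_f among all link vectors in {1,2}^{n−2}; and for n = 3, TI_f((1)) = TI_f((2)). -/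
noncomputable section
open Classical

/-- if `g_f(1,1)` dominates and `g_f(1,1) = g_f(2)`, the linear
chain is the unique maximizer for every `n ≥ 4`, and for `n = 3` the two chains
tie: `TI_f((1)) = TI_f((2))`. -/
theorem stmt8 (f : ℕ → ℕ → ℝ) (hsym : ∀ x y, f x y = f y x)
    (hdom : gpair f 1 1 > max (max (gpair f 1 2) (gpair f 2 2)) ((gpair f 1 2 + gpair f 2 1) / 2))
    (hg : gpair f 1 1 = gone f 2) :
    (∀ n, 4 ≤ n → ∀ L, ValidLinks n L → L ≠ List.replicate (n - 2) 1 →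
      TI f L < TI f (List.replicate (n - 2) 1)) ∧
    TI f [1] = TI f [2] := by
  have h12 : gpair f 1 2 < gpair f 1 1 :=
    lt_of_le_of_lt (le_trans (le_max_left _ _) (le_max_left _ _)) hdom
  have h22 : gpair f 2 2 < gpair f 1 1 :=
    lt_of_le_of_lt (le_trans (le_max_right _ _) (le_max_left _ _)) hdom
  have h21 : gpair f 2 1 < gpair f 1 1 := by
    have heq : gpair f 2 1 = gpair f 1 2 := by
      simp only [gpair, gone] at hg ⊢
      norm_num at hg ⊢
      linarith
    linarith
  have hlt : ∀ a b : ℕ, (a = 1 ∨ a = 2) → (b = 1 ∨ b = 2) → (a = 2 ∨ b = 2) →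
      gpair f a b < gpair f 1 1 := by
    rintro a b (rfl | rfl) (rfl | rfl) h
    · omega
    · exact h12
    · exact h21
    · exact h22
  have hle : ∀ a b : ℕ, (a = 1 ∨ a = 2) → (b = 1 ∨ b = 2) →
      gpair f a b ≤ gpair f 1 1 := by
    intro a b ha hb
    by_cases h : a = 2 ∨ b = 2
    · exact (hlt a b ha hb h).le
    · push_neg at h
      obtain ⟨h1, h2⟩ := h
      rw [ha.resolve_right h1, hb.resolve_right h2]
  have hbound : ∀ t : List ℕ, ∀ a, (a = 1 ∨ a = 2) → (∀ x ∈ t, x = 1 ∨ x = 2) →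
      chainSum f a t ≤ t.length * gpair f 1 1 := by
    intro t
    induction t with
    | nil => intro a _ _; simp [chainSum]
    | cons b s ih =>
      intro a ha h
      have hb := h b (by simp)
      have hs : ∀ x ∈ s, x = 1 ∨ x = 2 := fun x hx => h x (by simp [hx])
      have h1 := ih b hb hs
      have h2 := hle a b ha hb
      simp only [chainSum, List.length_cons]
      push_cast
      linarith
  have hstrict : ∀ t : List ℕ, ∀ a, (a = 1 ∨ a = 2) → (∀ x ∈ t, x = 1 ∨ x = 2) →
      (a = 2 ∨ ∃ x ∈ t, x = 2) → t ≠ [] →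
      chainSum f a t < t.length * gpair f 1 1 := by
    intro t
    induction t with
    | nil => intro a _ _ _ h; exact absurd rfl h
    | cons b s ih =>
      intro a ha h h2 _
      have hb := h b (by simp)
      have hs : ∀ x ∈ s, x = 1 ∨ x = 2 := fun x hx => h x (by simp [hx])
      have hbs := hbound s b hb hs
      by_cases hab : a = 2 ∨ b = 2
      · have := hlt a b ha hb hab
        simp only [chainSum, List.length_cons]
        push_cast
        linarith
      · push_neg at hab
        have ha1 : a = 1 := ha.resolve_right hab.1
        have hb1 : b = 1 := hb.resolve_right hab.2
        obtain ⟨x, hx, hx2⟩ := h2.resolve_left hab.1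
        have hxs : x ∈ s := by
          rcases List.mem_cons.1 hx with rfl | h'
          · omega
          · exact h'
        have hsne : s ≠ [] := by rintro rfl; simp at hxs
        have hrec := ih b hb hs (Or.inr ⟨x, hxs, hx2⟩) hsne
        have hgab : gpair f a b = gpair f 1 1 := by rw [ha1, hb1]
        simp only [chainSum, List.length_cons]
        push_cast
        linarith
  have hrep : ∀ k : ℕ, chainSum f 1 (List.replicate k 1) = k * gpair f 1 1 := by
    intro k
    induction k with
    | zero => simp [chainSum]
    | succ k ih =>
      rw [List.replicate_succ]
      simp only [chainSum, ih, List.length_replicate]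
      push_cast
      ring
  have hgone1 : gone f 1 = gpair f 1 1 := by simp [gone, gpair]
  constructor
  · intro n hn L hL hne
    obtain ⟨hlen, hmem⟩ := hL
    match L, hlen with
    | [], hlen => simp at hlen; omega
    | a :: t, hlen =>
      have ha := hmem a (by simp)
      have hs : ∀ x ∈ t, x = 1 ∨ x = 2 := fun x hx => hmem x (by simp [hx])
      have htl : t.length = n - 3 := by
        simp only [List.length_cons] at hlen; omega
      have htne : t ≠ [] := by
        intro h; rw [h] at htl; simp at htl; omega
      have hm : n - 2 = (n - 3) + 1 := by omega
      have h2 : a = 2 ∨ ∃ x ∈ t, x = 2 := by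
        by_contra hc
        push_neg at hc
        obtain ⟨hc1, hc2⟩ := hc
        apply hne
        have ha1 : a = 1 := ha.resolve_right hc1
        have ht1 : ∀ x ∈ t, x = 1 := by
          intro x hx
          rcases hs x hx with h | h
          · exact h
          · exact absurd h (hc2 x hx)
        rw [hm, List.replicate_succ, ha1]
        congr 1
        rw [List.eq_replicate_iff]
        exact ⟨htl, ht1⟩
      have hgonea : gone f a = gpair f 1 1 := by
        rcases ha with rfl | rfl
        · exact hgone1
        · exact hg.symm
      have hcs := hstrict t a ha hs h2 htne
      rw [hm, List.replicate_succ]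
      show cst f + gone f a + chainSum f a t <
        cst f + gone f 1 + chainSum f 1 (List.replicate (n - 3) 1)
      rw [htl] at hcs
      rw [hrep, hgone1, hgonea]
      linarith
  · show cst f + gone f 1 + chainSum f 1 [] = cst f + gone f 2 + chainSum f 2 []
    simp only [chainSum]
    rw [hgone1, hg]

end
end

section
/- Let f be a symmetric real-valued function on pairs of positive integers such that g_f(1,1) > max{ g_f(1,2), g_f(2,2), (g_f(1,2) + g_f(2,1))/2 } and g_f(1,1) < g_f(2), and set n* = ⌈ (g_f(2) − g_f(1,1))/(g_f(1,1) − g_f(2,2)) + 3 ⌉. Then for every n with 3 ≤ n < n*, the all-twos link vector (the zigzag chain Z_n) is the unique maximizer of TI_f among all link vectors in {1,2}^{n−2}. -/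
noncomputable section
open Classical

lemma gone_one (f : ℕ → ℕ → ℝ) : gone f 1 = gpair f 1 1 := by simp [gone, gpair]

lemma grel (f : ℕ → ℕ → ℝ) : gpair f 2 1 = gpair f 1 2 + gpair f 1 1 - gone f 2 := by
  simp [gpair, gone]; ring

lemma chainSum_snoc (f : ℕ → ℕ → ℝ) (L : List ℕ) (j : ℕ) :
    ∀ p, chainSum f p (L ++ [j]) = chainSum f p L + gpair f ((p :: L).getLast (by simp)) j := by
  induction L with
  | nil => intro p; simp [chainSum]
  | cons q t ih => intro p; simp [chainSum, ih q, List.getLast]; ring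

lemma TI_snoc (f : ℕ → ℕ → ℝ) (L : List ℕ) (h : L ≠ []) (j : ℕ) :
    TI f (L ++ [j]) = TI f L + gpair f (L.getLast h) j := by
  cases L with
  | nil => exact absurd rfl h
  | cons a t => simp [TI, chainSum_snoc]; ring

lemma chainSum_replicate (f : ℕ → ℕ → ℝ) : ∀ k, chainSum f 2 (List.replicate k 2) = k * gpair f 2 2 := by
  intro k; induction k with
  | zero => simp [chainSum]
  | succ n ih => simp [List.replicate_succ, chainSum, ih]; push_cast; ring

lemma TI_replicate (f : ℕ → ℕ → ℝ) (m : ℕ) (hm : 1 ≤ m) :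
    TI f (List.replicate m 2) = cst f + gone f 2 + ((m:ℝ) - 1) * gpair f 2 2 := by
  obtain ⟨k, rfl⟩ := Nat.exists_eq_add_of_le hm
  rw [show 1 + k = k + 1 by omega, List.replicate_succ]
  show cst f + gone f 2 + chainSum f 2 (List.replicate k 2) = _
  rw [chainSum_replicate]; push_cast; ring

lemma key (f : ℕ → ℕ → ℝ)
    (hba : gpair f 1 2 < gpair f 1 1) (hda : gpair f 2 2 < gpair f 1 1)
    (hag : gpair f 1 1 < gone f 2) :
    ∀ m : ℕ, 1 ≤ m →
      ((m : ℝ) - 1) * (gpair f 1 1 - gpair f 2 2) < gone f 2 - gpair f 1 1 →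
      (∀ L : List ℕ, L.length = m → (∀ x ∈ L, x = 1 ∨ x = 2) → L.getLast? = some 1 →
        TI f L ≤ cst f + m * gpair f 1 1) ∧
      (∀ L : List ℕ, L.length = m → (∀ x ∈ L, x = 1 ∨ x = 2) → L.getLast? = some 2 →
        L ≠ List.replicate m 2 → TI f L < cst f + gone f 2 + ((m:ℝ) - 1) * gpair f 2 2) := by
  intro m
  induction m with
  | zero => omega
  | succ k ih =>
    intro _ hrange
    rcases Nat.eq_zero_or_pos k with hk | hk
    · subst hk
      constructor
      · intro L hlen hmem hlast
        match L, hlen with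
        | [x], _ =>
          have hx : x = 1 := by simpa using hlast
          subst hx
          simp only [TI, chainSum, gone_one]
          push_cast; nlinarith [le_refl (gpair f 1 1)]
      · intro L hlen hmem hlast hne
        match L, hlen with
        | [x], _ =>
          have hx : x = 2 := by simpa using hlast
          subst hx
          exact absurd rfl hne
    · -- k ≥ 1
      have hrange' : ((k : ℝ) - 1) * (gpair f 1 1 - gpair f 2 2) < gone f 2 - gpair f 1 1 := by
        have h1 : ((k:ℝ) - 1) ≤ ((k:ℝ) + 1 - 1) := by linarith
        have := hrange
        push_cast at this ⊢
        nlinarith [hda]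
      obtain ⟨IH1, IH2⟩ := ih hk hrange'
      -- bound for any chain of length k ending in 2 (including the zigzag)
      have hB : ∀ M : List ℕ, M.length = k → (∀ x ∈ M, x = 1 ∨ x = 2) →
          M.getLast? = some 2 →
          TI f M ≤ cst f + gone f 2 + ((k:ℝ) - 1) * gpair f 2 2 := by
        intro M hlen hmem hlast
        by_cases hM : M = List.replicate k 2
        · subst hM; rw [TI_replicate f k hk]
        · exact le_of_lt (IH2 M hlen hmem hlast hM)
      have hkne : ∀ M : List ℕ, M.length = k → M ≠ [] := by
        intro M hlen h; subst h; simp at hlen; omega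
      constructor
      · -- ending in 1
        intro L hlen hmem hlast
        have hLne : L ≠ [] := by intro h; subst h; simp at hlen
        have hdec := List.dropLast_append_getLast hLne
        set M := L.dropLast with hMdef
        have hMlen : M.length = k := by
          rw [hMdef, List.length_dropLast, hlen]; omega
        have hMne : M ≠ [] := hkne M hMlen
        have hj : L.getLast hLne = 1 := by
          have := List.getLast?_eq_getLast hLne
          rw [this] at hlast; simpa using hlast
        have hTI : TI f L = TI f M + gpair f (M.getLast hMne) 1 := by
          conv_lhs => rw [← hdec]
          rw [TI_snoc f M hMne, hj]
        have hMmem : ∀ x ∈ M, x = 1 ∨ x = 2 := by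
          intro x hx; exact hmem x (by rw [← hdec]; exact List.mem_append_left _ hx)
        have hi := hMmem _ (List.getLast_mem hMne)
        rcases hi with hi | hi
        · have hMlast : M.getLast? = some 1 := by
            rw [List.getLast?_eq_getLast hMne, hi]
          have := IH1 M hMlen hMmem hMlast
          rw [hTI, hi]
          push_cast
          nlinarith
        · have hMlast : M.getLast? = some 2 := by
            rw [List.getLast?_eq_getLast hMne, hi]
          have := hB M hMlen hMmem hMlast
          rw [hTI, hi, grel f]
          have hk1 : (1:ℝ) ≤ (k:ℝ) := by exact_mod_cast hk
          push_cast
          nlinarith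
      · -- ending in 2
        intro L hlen hmem hlast hne
        have hLne : L ≠ [] := by intro h; subst h; simp at hlen
        have hdec := List.dropLast_append_getLast hLne
        set M := L.dropLast with hMdef
        have hMlen : M.length = k := by
          rw [hMdef, List.length_dropLast, hlen]; omega
        have hMne : M ≠ [] := hkne M hMlen
        have hj : L.getLast hLne = 2 := by
          have := List.getLast?_eq_getLast hLne
          rw [this] at hlast; simpa using hlast
        have hTI : TI f L = TI f M + gpair f (M.getLast hMne) 2 := by
          conv_lhs => rw [← hdec]
          rw [TI_snoc f M hMne, hj]
        have hMmem : ∀ x ∈ M, x = 1 ∨ x = 2 := by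
          intro x hx; exact hmem x (by rw [← hdec]; exact List.mem_append_left _ hx)
        have hi := hMmem _ (List.getLast_mem hMne)
        rcases hi with hi | hi
        · have hMlast : M.getLast? = some 1 := by
            rw [List.getLast?_eq_getLast hMne, hi]
          have h1 := IH1 M hMlen hMmem hMlast
          rw [hTI, hi]
          have hb12 : gpair f 1 2 < gpair f 1 1 := hba
          push_cast at hrange ⊢
          nlinarith
        · have hMlast : M.getLast? = some 2 := by
            rw [List.getLast?_eq_getLast hMne, hi]
          have hMrep : M ≠ List.replicate k 2 := by
            intro h
            apply hne
            rw [← hdec, h, hj, ← List.replicate_succ']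
          have h2 := IH2 M hMlen hMmem hMlast hMrep
          rw [hTI, hi]
          push_cast
          nlinarith

/-- if `g_f(1,1)` dominates and `g_f(1,1) < g_f(2)`, then for all
`3 ≤ n < n*` the zigzag chain (all-twos link vector) is the unique maximizer. -/
theorem stmt9 (f : ℕ → ℕ → ℝ) (hsym : ∀ x y, f x y = f y x)
    (hdom : gpair f 1 1 > max (max (gpair f 1 2) (gpair f 2 2)) ((gpair f 1 2 + gpair f 2 1) / 2))
    (hg : gpair f 1 1 < gone f 2) :
    ∀ n : ℕ, 3 ≤ n →
      (n : ℤ) < ⌈(gone f 2 - gpair f 1 1) / (gpair f 1 1 - gpair f 2 2) + 3⌉ →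
      ∀ L, ValidLinks n L → L ≠ List.replicate (n - 2) 2 →
        TI f L < TI f (List.replicate (n - 2) 2) := by
  have hba : gpair f 1 2 < gpair f 1 1 :=
    lt_of_le_of_lt ((le_max_left _ (gpair f 2 2)).trans (le_max_left _ _)) hdom
  have hda : gpair f 2 2 < gpair f 1 1 :=
    lt_of_le_of_lt ((le_max_right (gpair f 1 2) _).trans (le_max_left _ _)) hdom
  intro n hn hceil L hL hne
  set m := n - 2 with hmdef
  have hm : 1 ≤ m := by omega
  have hcast : (m : ℝ) = (n : ℝ) - 2 := by
    rw [hmdef]; push_cast [Nat.cast_sub (by omega : 2 ≤ n)]; ring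
  have he : (0:ℝ) < gpair f 1 1 - gpair f 2 2 := by linarith
  have hr0 : ((n:ℝ)) < (gone f 2 - gpair f 1 1) / (gpair f 1 1 - gpair f 2 2) + 3 := by
    have := Int.lt_ceil.mp hceil
    push_cast at this
    exact this
  have hrange : ((m:ℝ) - 1) * (gpair f 1 1 - gpair f 2 2) < gone f 2 - gpair f 1 1 := by
    rw [hcast]
    have h3 : ((n:ℝ) - 3) < (gone f 2 - gpair f 1 1) / (gpair f 1 1 - gpair f 2 2) := by
      linarith
    have := (lt_div_iff₀ he).mp h3
    linarith
  obtain ⟨K1, K2⟩ := key f hba hda hg m hm hrange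
  obtain ⟨hlen, hmem⟩ := hL
  have hLne : L ≠ [] := by intro h; subst h; simp at hlen; omega
  rw [TI_replicate f m hm]
  have hi := hmem _ (List.getLast_mem hLne)
  rcases hi with hi | hi
  · have h1 := K1 L hlen hmem (by rw [List.getLast?_eq_getLast hLne, hi])
    have : (m:ℝ) * gpair f 1 1 < gone f 2 + ((m:ℝ) - 1) * gpair f 2 2 := by
      nlinarith
    linarith
  · exact K2 L hlen hmem (by rw [List.getLast?_eq_getLast hLne, hi]) hne


end
end

section
/- For the augmented Zagreb index (f(x,y) = (xy/(x+y−2))³) and every n ≥ 6, the all-ones link vector (the linear chain Li_n) attains the minimum of TI_f among all link vectors in {1,2}^{n−2}. -/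
noncomputable section
open Classical

lemma gpair_ge (a b : ℕ) : (2187/64 : ℝ) ≤ gpair fAZI a b := by
  unfold gpair
  split <;> split <;> norm_num [fAZI]

lemma gpair21_ge (a : ℕ) (ha : a ≠ 1) :
    (2187/64 : ℝ) + 1367/576 ≤ gpair fAZI a 1 := by
  simp only [gpair, if_neg ha, if_pos rfl]
  norm_num [fAZI]

lemma gpair22_ge (a b : ℕ) (ha : a ≠ 1) (hb : b ≠ 1) :
    (2187/64 : ℝ) + 1367/1728 ≤ gpair fAZI a b := by
  simp only [gpair, if_neg ha, if_neg hb]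
  norm_num [fAZI]

lemma chainSum_ge : ∀ (t : List ℕ) (a : ℕ),
    (t.length : ℝ) * (2187/64) ≤ chainSum fAZI a t := by
  intro t
  induction t with
  | nil => simp [chainSum]
  | cons b s ih =>
    intro a
    have h1 := gpair_ge a b
    have h2 := ih b
    simp only [chainSum, List.length_cons]
    push_cast
    linarith

lemma chainSum2_ge : ∀ (t : List ℕ) (a : ℕ), a ≠ 1 →
    (t.length : ℝ) * (2187/64) + (min t.length 3 : ℕ) * (1367/1728)
      ≤ chainSum fAZI a t := by
  intro t
  induction t with
  | nil => intro a _; simp [chainSum]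
  | cons b s ih =>
    intro a ha
    simp only [chainSum, List.length_cons]
    by_cases hb : b = 1
    · subst hb
      have h1 := gpair21_ge a ha
      have h2 := chainSum_ge s 1
      have h3 : ((min (s.length + 1) 3 : ℕ) : ℝ) ≤ 3 := by
        exact_mod_cast Nat.cast_le.mpr (min_le_right _ _)
      have h4 : (0:ℝ) ≤ ((min (s.length + 1) 3 : ℕ) : ℝ) := by positivity
      push_cast at h3 h4 ⊢
      nlinarith
    · have h1 := gpair22_ge a b ha hb
      have h2 := ih b hb
      have h3 : ((min (s.length + 1) 3 : ℕ) : ℝ) ≤ (min s.length 3 : ℕ) + 1 := by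
        have : min (s.length + 1) 3 ≤ min s.length 3 + 1 := by omega
        exact_mod_cast this
      push_cast at h2 h3 ⊢
      nlinarith

lemma chainSum_replicate_s13 (m : ℕ) :
    chainSum fAZI 1 (List.replicate m 1) = (m : ℝ) * (2187/64) := by
  induction m with
  | zero => simp [chainSum]
  | succ k ih =>
    simp only [List.replicate_succ, chainSum, ih]
    have : gpair fAZI 1 1 = 2187/64 := by norm_num [gpair, fAZI]
    rw [this]
    push_cast
    ring

/-- for the augmented Zagreb index and `n ≥ 6`, the linear chain
attains the minimum of `TI` over all link vectors. -/
theorem stmt13 :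
    ∀ n : ℕ, 6 ≤ n → ∀ L, ValidLinks n L →
      TI fAZI (List.replicate (n - 2) 1) ≤ TI fAZI L := by
  intro n hn L hL
  obtain ⟨hlen, hmem⟩ := hL
  have hlen4 : 4 ≤ L.length := by omega
  obtain ⟨a, t, rfl⟩ : ∃ a t, L = a :: t := by
    cases L with
    | nil => simp at hlen4
    | cons a t => exact ⟨a, t, rfl⟩
  have ht3 : 3 ≤ t.length := by simp at hlen4; omega
  have hrep : n - 2 = t.length + 1 := by
    simp at hlen; omega
  rw [hrep]
  have hTIrep : TI fAZI (List.replicate (t.length + 1) 1)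
      = cst fAZI + gone fAZI 1 + (t.length : ℝ) * (2187/64) := by
    rw [List.replicate_succ]
    show cst fAZI + gone fAZI 1 + chainSum fAZI 1 (List.replicate t.length 1) = _
    rw [chainSum_replicate_s13]
  rw [hTIrep]
  show cst fAZI + gone fAZI 1 + _ ≤ cst fAZI + gone fAZI a + chainSum fAZI a t
  rcases hmem a (by simp) with ha | ha
  · subst ha
    have := chainSum_ge t 1
    linarith
  · subst ha
    have h1 := chainSum2_ge t 2 (by norm_num)
    have hmin : min t.length 3 = 3 := by omega
    rw [hmin] at h1
    have hg1 : gone fAZI 1 = 2187/64 := by norm_num [gone, fAZI]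
    have hg2 : gone fAZI 2 = 258059/8000 := by norm_num [gone, fAZI]
    rw [hg1, hg2]
    norm_num at h1 ⊢
    linarith

end
end

section
/- For the augmented Zagreb index (f(x,y) = (xy/(x+y−2))³) and every n ≥ 5, the maximum of TI_f over all link vectors in {1,2}^{n−2} equals (4456/125)·n − 26763/2000 − (2312/3375)·[n is even], where [n is even] equals 1 if n is even and 0 otherwise. -/
noncomputable section
open Classical

lemma g11 : gpair fAZI 1 1 = 2187/64 := by norm_num [gpair, fAZI]
lemma g12 : gpair fAZI 1 2 = 138763/4000 := by norm_num [gpair, fAZI]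
lemma g21 : gpair fAZI 2 1 = 146421/4000 := by norm_num [gpair, fAZI]
lemma g22 : gpair fAZI 2 2 = 944/27 := by norm_num [gpair, fAZI]
lemma go1 : gone fAZI 1 = 2187/64 := by norm_num [gone, fAZI]
lemma go2 : gone fAZI 2 = 258059/8000 := by norm_num [gone, fAZI]
lemma cstAZI : cst fAZI = 3801/64 := by norm_num [cst, fAZI]

def Bnd (m a : ℕ) : ℝ :=
  if a = 1 then (4456/125)*m - (if Odd m then 2312/3375 else 0)
  else (4456/125)*m + (if Odd m then 3829/4000 else 29399/108000)

lemma cs_le : ∀ (t : List ℕ), (∀ x ∈ t, x = 1 ∨ x = 2) → ∀ a, (a = 1 ∨ a = 2) →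
    chainSum fAZI a t ≤ Bnd t.length a := by
  intro t
  induction t with
  | nil =>
    intro _ a ha
    rcases ha with rfl | rfl <;> simp [chainSum, Bnd] <;> norm_num
  | cons b t ih =>
    intro hmem a ha
    have hb : b = 1 ∨ b = 2 := hmem b (by simp)
    have h1 : chainSum fAZI b t ≤ Bnd t.length b :=
      ih (fun x hx => hmem x (by simp [hx])) b hb
    have key : gpair fAZI a b + Bnd t.length b ≤ Bnd (t.length + 1) a := by
      rcases Nat.even_or_odd t.length with hm | hm
      · have hno : ¬ Odd t.length := (Nat.not_odd_iff_even).mpr hm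
        have hodd : Odd (t.length + 1) := Even.add_one hm
        rcases ha with rfl | rfl <;> rcases hb with rfl | rfl <;>
          simp [Bnd, g11, g12, g21, g22, hno, hodd] <;> push_cast <;> linarith
      · have hno : ¬ Odd (t.length + 1) := (Nat.not_odd_iff_even).mpr (Odd.add_one hm)
        rcases ha with rfl | rfl <;> rcases hb with rfl | rfl <;>
          simp [Bnd, g11, g12, g21, g22, hm, hno] <;> push_cast <;> linarith
    calc chainSum fAZI a (b :: t) = gpair fAZI a b + chainSum fAZI b t := rfl
      _ ≤ gpair fAZI a b + Bnd t.length b := by linarith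
      _ ≤ Bnd (t.length + 1) a := key
def W : ℕ → List ℕ
  | 0 => [1, 2, 1]
  | 1 => [1, 2, 2, 1]
  | k + 2 => 1 :: 2 :: W k

lemma W_len : ∀ k, (W k).length = k + 3
  | 0 => rfl
  | 1 => rfl
  | k + 2 => by simp [W, W_len k]

lemma W_mem : ∀ k, ∀ x ∈ W k, x = 1 ∨ x = 2
  | 0 => by intro x hx; simp [W] at hx; rcases hx with rfl|rfl|rfl <;> simp
  | 1 => by intro x hx; simp [W] at hx; rcases hx with rfl|rfl|rfl|rfl <;> simp
  | k + 2 => by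
      intro x hx
      simp only [W, List.mem_cons] at hx
      rcases hx with rfl | rfl | hx
      · left; rfl
      · right; rfl
      · exact W_mem k x hx

lemma W_cs : ∀ k, ∃ t, W k = 1 :: t ∧
    chainSum fAZI 1 t = (4456/125) * ((k : ℝ) + 2) - (if Odd k then 2312/3375 else 0)
  | 0 => by
    refine ⟨[2, 1], rfl, ?_⟩
    simp [chainSum, g12, g21]
    norm_num
  | 1 => by
    refine ⟨[2, 2, 1], rfl, ?_⟩
    simp [chainSum, g12, g21, g22]
    norm_num
  | k + 2 => by
    obtain ⟨t, ht, hcs⟩ := W_cs k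
    refine ⟨2 :: W k, rfl, ?_⟩
    have hstep : chainSum fAZI 1 (2 :: W k)
        = gpair fAZI 1 2 + gpair fAZI 2 1 + chainSum fAZI 1 t := by
      rw [show chainSum fAZI 1 (2 :: W k) = gpair fAZI 1 2 + chainSum fAZI 2 (W k) from rfl,
        ht, show chainSum fAZI 2 (1 :: t) = gpair fAZI 2 1 + chainSum fAZI 1 t from rfl]
      ring
    have hpar : Odd (k + 2) ↔ Odd k := by rw [Nat.odd_iff, Nat.odd_iff]; omega
    rw [hstep, g12, g21, hcs]
    by_cases hk : Odd k
    · simp [hk, hpar.mpr hk]; push_cast; ring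
    · simp [hk, (not_iff_not.mpr hpar).mpr hk]; push_cast; ring


/-- closed form for the maximum augmented Zagreb index over all
polyomino chains with `n ≥ 5` squares. -/
theorem stmt15 :
    ∀ n : ℕ, 5 ≤ n →
      IsGreatest {t : ℝ | ∃ L, ValidLinks n L ∧ TI fAZI L = t}
        ((4456 / 125) * n - 26763 / 2000 - if Even n then 2312 / 3375 else 0) := by
  intro n hn
  have hc3 : ((n - 3 : ℕ) : ℝ) = (n : ℝ) - 3 := by
    have h3 : (3:ℕ) ≤ n := by omega
    push_cast [h3]; ring
  constructor
  · -- membership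
    obtain ⟨t, ht, hcs⟩ := W_cs (n - 5)
    refine ⟨W (n - 5), ⟨by rw [W_len]; omega, W_mem _⟩, ?_⟩
    rw [ht]
    show cst fAZI + gone fAZI 1 + chainSum fAZI 1 t = _
    rw [cstAZI, go1, hcs]
    have hc5 : ((n - 5 : ℕ) : ℝ) = (n : ℝ) - 5 := by push_cast [hn]; ring
    have hpar : Odd (n - 5) ↔ Even n := by
      rw [Nat.odd_iff, Nat.even_iff]; omega
    rw [hc5]
    by_cases he : Even n
    · simp only [he, if_true, hpar.mpr he, if_pos]; ring
    · simp only [he, if_false, if_neg ((not_iff_not.mpr hpar).mpr he)]; ring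
  · rintro x ⟨L, ⟨hlen, hm⟩, rfl⟩
    match L, hlen with
    | [], hlen => simp only [List.length] at hlen; omega
    | a :: t, hlen =>
      have ha : a = 1 ∨ a = 2 := hm a (by simp)
      have hcs := cs_le t (fun x hx => hm x (by simp [hx])) a ha
      have hlt : t.length = n - 3 := by
        simp only [List.length_cons] at hlen; omega
      rw [hlt] at hcs
      have hTI : TI fAZI (a :: t) = cst fAZI + gone fAZI a + chainSum fAZI a t := rfl
      have hpar : Odd (n - 3) ↔ Even n := by
        rw [Nat.odd_iff, Nat.even_iff]; omega
      by_cases he : Even n <;>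
        rcases ha with rfl | rfl <;>
          simp only [Bnd, he, if_true, if_false, hpar.mpr, if_pos, if_neg, hc3,
            (not_iff_not.mpr hpar), cstAZI, go1, go2, hTI] at hcs ⊢
      · linarith
      · rw [if_neg (by norm_num : ¬(2:ℕ) = 1)] at hcs; linarith
      · rw [if_neg ((not_iff_not.mpr hpar).mpr he)] at hcs; linarith
      · rw [if_neg (by norm_num : ¬(2:ℕ) = 1),
          if_neg ((not_iff_not.mpr hpar).mpr he)] at hcs; linarith

end
end
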